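/- For α ∈ (0,2), let Q_n = Σ_{j=0}^{n−1} A_j j^2 where A_j are the sub-travelling areas of the slicer map S_α. Then lim_{n→∞} Q_n/n^γ equals +∞ if 0 ≤ γ < 2−α, equals α/(2−α) if γ = 2−α, and equals 0 if 2−α < γ ≤ 2. -/

import Mathlib

open Filter

noncomputable def ella (α : ℝ) (m : ℤ) : ℝ :=
  (((|m| : ℤ) : ℝ) + (2:ℝ) ^ (1/α)) ^ (-α)

/-- The sub-travelling areas of the slicer map `S_α` at time `n` (closed form):
`A_0 = 2(ℓ_0 - ℓ_1)` for even `n`, `A_j = ℓ_{|j|-1} - ℓ_{|j|+1}` for `0 < |j| < n`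
with `j ≡ n (mod 2)`, and `A_j = 0` otherwise. -/
noncomputable def subA (α : ℝ) (n : ℕ) (j : ℤ) : ℝ :=
  if j = 0 ∧ Even n then 2 * (ella α 0 - ella α 1)
  else if 0 < |j| ∧ |j| < (n:ℤ) ∧ j % 2 = (n:ℤ) % 2 then
    ella α (|j| - 1) - ella α (|j| + 1)
  else 0

open Real Asymptotics Topology

/-!
Writing `ℓ m = (m + 2 ^ (1 / α)) ^ (-α)`, the sums move in steps of two:
`Q (n + 2) - Q n = n ^ 2 * (ℓ (n - 1) - ℓ (n + 1)) ~ 2 α n ^ (1 - α)`, while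
`(n + 2) ^ (2 - α) - n ^ (2 - α) ~ 2 (2 - α) n ^ (1 - α)`; both are derivatives of `x ↦ x ^ p`
in disguise. Stolz–Cesàro along the even and along the odd integers gives
`Q n / n ^ (2 - α) → α / (2 - α)`, and the other two regimes follow by multiplying with
`n ^ (2 - α - γ)`.
-/

lemma tendsto_of_forall_tendsto_mul_add {X : Type*} {f : ℕ → X} {l : Filter X} {k : ℕ}
    (hk : 0 < k) (h : ∀ r < k, Tendsto (fun m => f (k * m + r)) atTop l) :
    Tendsto f atTop l := by
  intro s hs
  obtain ⟨N, hN⟩ := eventually_atTop.1 <|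
    (eventually_all_finite (Set.finite_Iio k)).2 fun r hr => h r hr hs
  refine mem_atTop_sets.2 ⟨k * N, fun n hn => show f n ∈ s from ?_⟩
  have := hN (n / k) ((Nat.le_div_iff_mul_le hk).2 (by linarith)) (n % k) (Nat.mod_lt n hk)
  simpa only [Nat.div_add_mod] using this

/-- Stolz–Cesàro. -/
lemma tendsto_div_of_tendsto_sub_div_sub {a b : ℕ → ℝ} {L : ℝ} (hb : StrictMono b)
    (hb_top : Tendsto b atTop atTop)
    (h : Tendsto (fun n => (a (n + 1) - a n) / (b (n + 1) - b n)) atTop (𝓝 L)) :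
    Tendsto (fun n => a n / b n) atTop (𝓝 L) := by
  have hΔb : ∀ n, 0 < b (n + 1) - b n := fun n => sub_pos.2 (hb n.lt_succ_self)
  have hstep : (fun n => a (n + 1) - a n - L * (b (n + 1) - b n)) =o[atTop]
      fun n => b (n + 1) - b n := by
    rw [isLittleO_iff_tendsto fun n h0 => absurd h0 (hΔb n).ne']
    refine (tendsto_sub_nhds_zero_iff.2 h).congr fun n => ?_
    field_simp [(hΔb n).ne']
  have hsum := hstep.sum_range (fun n => (hΔb n).le) <| by
    simp_rw [Finset.sum_range_sub (fun n => b n)]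
    exact tendsto_atTop_add_const_right _ _ hb_top
  simp only [Finset.sum_sub_distrib, ← Finset.mul_sum, Finset.sum_range_sub (fun n => a n),
    Finset.sum_range_sub (fun n => b n)] at hsum
  have hconst : ∀ C : ℝ, (fun _ => C) =o[atTop] b := fun C =>
    isLittleO_const_left.2 (Or.inr (tendsto_norm_atTop_atTop.comp hb_top))
  have hdiff : (fun n => a n - L * b n) =o[atTop] b :=
    ((hsum.trans_isBigO ((isBigO_refl b _).sub (hconst _).isBigO)).add
      (hconst (a 0 - L * b 0))).congr_left fun n => by ring
  refine (zero_add L ▸ ((isLittleO_iff_tendsto' ?_).1 hdiff).add_const L).congr' ?_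
  · filter_upwards [hb_top.eventually_gt_atTop 0] with n hn h0 using absurd h0 hn.ne'
  · filter_upwards [hb_top.eventually_gt_atTop 0] with n hn
    field_simp [hn.ne']
    ring

lemma tendsto_rpow_add_sub_rpow_add_div_rpow (p a b : ℝ) :
    Tendsto (fun x : ℝ => ((x + a) ^ p - (x + b) ^ p) / x ^ (p - 1)) atTop
      (𝓝 (p * (a - b))) := by
  have hshift : ∀ c : ℝ, HasDerivAt (fun t : ℝ => (1 + c * t) ^ p) (c * p) 0 := fun c => by
    simpa using (((hasDerivAt_id (0:ℝ)).const_mul c).const_add 1).rpow_const (p := p)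
      (Or.inl (by simp))
  -- with `t = x⁻¹`, the quotient is the difference quotient of `(1 + a t) ^ p - (1 + b t) ^ p` at 0
  have hslope := ((hshift a).sub (hshift b)).tendsto_slope_zero_right.comp
    tendsto_inv_atTop_nhdsGT_zero
  rw [show (a * p - b * p) = p * (a - b) by ring] at hslope
  refine hslope.congr' ?_
  filter_upwards [eventually_gt_atTop (max |a| |b|)] with x hx
  have hx0 : 0 < x := lt_of_le_of_lt (le_max_of_le_left (abs_nonneg a)) hx
  have hfactor : ∀ c : ℝ, |c| < x → (x + c) ^ p = x ^ p * (1 + c * x⁻¹) ^ p := fun c hc => by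
    have hxc : 0 < x + c := by linarith [neg_abs_le c]
    have hc' : 0 ≤ 1 + c * x⁻¹ := by
      rw [show 1 + c * x⁻¹ = (x + c) * x⁻¹ by field_simp]; positivity
    rw [← mul_rpow hx0.le hc']
    congr 1
    field_simp
  simp only [Function.comp_apply, inv_inv, smul_eq_mul, Pi.sub_apply, zero_add, mul_zero, add_zero,
    one_rpow, sub_self, sub_zero, hfactor a (lt_of_le_of_lt (le_max_left _ _) hx),
    hfactor b (lt_of_le_of_lt (le_max_right _ _) hx), rpow_sub_one hx0.ne']
  field_simp [(rpow_pos_of_pos hx0 p).ne']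

lemma tendsto_increment_ratio {α : ℝ} (hα : α ≠ 2) (c : ℝ) :
    Tendsto (fun x : ℝ => x ^ 2 * ((x - 1 + c) ^ (-α) - (x + 1 + c) ^ (-α)) /
      ((x + 2) ^ (2 - α) - x ^ (2 - α))) atTop (𝓝 (α / (2 - α))) := by
  have hα' : 2 - α ≠ 0 := sub_ne_zero.2 hα.symm
  have hnum := tendsto_rpow_add_sub_rpow_add_div_rpow (-α) (c - 1) (c + 1)
  have hden := tendsto_rpow_add_sub_rpow_add_div_rpow (2 - α) 2 0
  have h := hnum.div hden (by simpa using hα')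
  rw [show -α * (c - 1 - (c + 1)) / ((2 - α) * (2 - 0)) = α / (2 - α) by field_simp; ring] at h
  refine h.congr' ?_
  filter_upwards [eventually_gt_atTop 0] with x hx
  have hpow : x ^ (2 - α - 1) = x ^ (-α - 1) * x ^ 2 := by
    rw [show 2 - α - 1 = -α - 1 + 2 by ring, rpow_add hx, rpow_two]
  rw [Pi.div_apply, hpow, add_zero, show x + (c - 1) = x - 1 + c by ring,
    show x + (c + 1) = x + 1 + c by ring]
  field_simp [(rpow_pos_of_pos hx (-α - 1)).ne']

lemma eventually_div_rpow_mul_rpow_sub (f : ℕ → ℝ) (s γ : ℝ) :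
    ∀ᶠ n : ℕ in atTop, f n / (n : ℝ) ^ s * (n : ℝ) ^ (s - γ) = f n / (n : ℝ) ^ γ := by
  filter_upwards [eventually_gt_atTop 0] with n hn
  have hn' : (0 : ℝ) < n := Nat.cast_pos.2 hn
  rw [rpow_sub hn']
  field_simp [(rpow_pos_of_pos hn' s).ne', (rpow_pos_of_pos hn' γ).ne']

section Rescaling

variable {f : ℕ → ℝ} {s γ L : ℝ}

lemma tendsto_div_rpow_atTop_of_lt (hf : Tendsto (fun n : ℕ => f n / (n : ℝ) ^ s) atTop (𝓝 L))
    (hL : 0 < L) (hγ : γ < s) : Tendsto (fun n : ℕ => f n / (n : ℝ) ^ γ) atTop atTop :=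
  (hf.pos_mul_atTop hL ((tendsto_rpow_atTop (sub_pos.2 hγ)).comp
    tendsto_natCast_atTop_atTop)).congr' (eventually_div_rpow_mul_rpow_sub f s γ)

lemma tendsto_div_rpow_zero_of_lt (hf : Tendsto (fun n : ℕ => f n / (n : ℝ) ^ s) atTop (𝓝 L))
    (hγ : s < γ) : Tendsto (fun n : ℕ => f n / (n : ℝ) ^ γ) atTop (𝓝 0) := by
  have hpow : Tendsto (fun n : ℕ => (n : ℝ) ^ (s - γ)) atTop (𝓝 0) := by
    simpa only [neg_sub, Function.comp_def] using
      (tendsto_rpow_neg_atTop (sub_pos.2 hγ)).comp tendsto_natCast_atTop_atTop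
  simpa only [mul_zero] using (hf.mul hpow).congr' (eventually_div_rpow_mul_rpow_sub f s γ)

end Rescaling

noncomputable def Q (α : ℝ) (n : ℕ) : ℝ :=
  ∑ j ∈ Finset.range n, subA α n (j:ℤ) * (j:ℝ)^2

lemma subA_add_two_of_lt (α : ℝ) {n j : ℕ} (hj : j < n) : subA α (n + 2) j = subA α n j := by
  simp only [subA, Int.abs_natCast, Nat.even_add, even_two, iff_true]
  congr 2
  push_cast
  apply propext
  omega

lemma subA_add_two_self (α : ℝ) {n : ℕ} (hn : 0 < n) :
    subA α (n + 2) n = ella α (n - 1) - ella α (n + 1) := by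
  simp only [subA, Int.abs_natCast]
  rw [if_neg (by omega), if_pos (by push_cast; omega)]

lemma subA_add_two_succ (α : ℝ) (n : ℕ) : subA α (n + 2) (n + 1 : ℕ) = 0 := by
  simp only [subA, Int.abs_natCast]
  rw [if_neg (by omega), if_neg (by push_cast; omega)]

lemma Q_add_two (α : ℝ) (n : ℕ) :
    Q α (n + 2) = Q α n + (n:ℝ)^2 * (ella α (n - 1) - ella α (n + 1)) := by
  have hlow : ∑ j ∈ Finset.range n, subA α (n + 2) j * (j:ℝ)^2 = Q α n :=
    Finset.sum_congr rfl fun j hj => by rw [subA_add_two_of_lt α (Finset.mem_range.1 hj)]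
  have htop : subA α (n + 2) n * (n:ℝ)^2 = (n:ℝ)^2 * (ella α (n - 1) - ella α (n + 1)) := by
    rcases n.eq_zero_or_pos with rfl | hn
    · simp
    · rw [subA_add_two_self α hn, mul_comm]
  rw [Q, Finset.sum_range_succ, Finset.sum_range_succ, hlow, htop, subA_add_two_succ, zero_mul,
    add_zero]

lemma ella_of_nonneg (α : ℝ) {m : ℤ} (hm : 0 ≤ m) :
    ella α m = ((m : ℝ) + 2 ^ (1 / α)) ^ (-α) := by
  rw [ella, abs_of_nonneg hm]

lemma tendsto_Q_div_rpow {α : ℝ} (hα : α ∈ Set.Ioo 0 2) :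
    Tendsto (fun n : ℕ => Q α n / (n : ℝ) ^ (2 - α)) atTop (𝓝 (α / (2 - α))) := by
  refine tendsto_of_forall_tendsto_mul_add two_pos fun r _ => ?_
  have hx : Tendsto (fun m : ℕ => ((2 * m + r : ℕ) : ℝ)) atTop atTop :=
    tendsto_natCast_atTop_atTop.comp <|
      tendsto_atTop_mono (fun m => show m ≤ 2 * m + r by omega) tendsto_id
  refine tendsto_div_of_tendsto_sub_div_sub (b := fun m => ((2 * m + r : ℕ) : ℝ) ^ (2 - α))
    (strictMono_nat_of_lt_succ fun m => rpow_lt_rpow (by positivity) (by push_cast; linarith)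
      (by linarith [hα.2]))
    ((tendsto_rpow_atTop (by linarith [hα.2])).comp hx) ?_
  refine ((tendsto_increment_ratio hα.2.ne (2 ^ (1 / α))).comp hx).congr' ?_
  filter_upwards [eventually_ge_atTop 1] with m hm
  rw [Function.comp_apply, show 2 * (m + 1) + r = 2 * m + r + 2 by ring, Q_add_two,
    add_sub_cancel_left, ella_of_nonneg α (by omega), ella_of_nonneg α (by omega)]
  push_cast
  ring_nf

/-- for `α ∈ (0,2)`, `Q_n = Σ_{j=0}^{n-1} A_j j²` satisfies
`Q_n/n^γ → ∞` for `0 ≤ γ < 2-α`, `→ α/(2-α)` for `γ = 2-α`, `→ 0` for `2-α < γ ≤ 2`. -/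
theorem Q_limit (α : ℝ) (hα : α ∈ Set.Ioo (0:ℝ) 2) :
    (∀ γ : ℝ, 0 ≤ γ → γ < 2 - α →
      Tendsto (fun n : ℕ =>
        (∑ j ∈ Finset.range n, subA α n (j:ℤ) * (j:ℝ)^2) / (n:ℝ)^γ) atTop atTop) ∧
    Tendsto (fun n : ℕ =>
        (∑ j ∈ Finset.range n, subA α n (j:ℤ) * (j:ℝ)^2) / (n:ℝ)^(2-α))
      atTop (nhds (α / (2 - α))) ∧
    (∀ γ : ℝ, 2 - α < γ → γ ≤ 2 →
      Tendsto (fun n : ℕ =>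
        (∑ j ∈ Finset.range n, subA α n (j:ℤ) * (j:ℝ)^2) / (n:ℝ)^γ) atTop (nhds 0)) := by
  have hQ := tendsto_Q_div_rpow hα
  exact ⟨fun γ _ hγ => tendsto_div_rpow_atTop_of_lt hQ (div_pos hα.1 (by linarith [hα.2])) hγ,
    hQ, fun γ hγ _ => tendsto_div_rpow_zero_of_lt hQ hγ⟩
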